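/- arXiv:1403.6782 — 2 statements merged into one kernel-verified Lean document; each statement's English description precedes it below -/
import Mathlib

section
/- Let n ≥ 1, let m₁,…,mₙ ∈ ℝ^k, and let λ ∈ ℝ^k satisfy 1 + ⟨λ, mᵢ⟩ > 0 for all i and Σᵢ mᵢ/(1 + ⟨λ, mᵢ⟩) = 0, and set p̃ᵢ := 1/(n(1 + ⟨λ, mᵢ⟩)). Then for every p₁,…,pₙ with pᵢ > 0 for all i, Σᵢ pᵢ = 1 and Σᵢ pᵢ mᵢ = 0, one has Σᵢ log(n pᵢ) ≤ Σᵢ log(n p̃ᵢ); that is, the implied probabilities maximize the empirical log-likelihood over the constraint set. -/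
open scoped BigOperators
open Matrix

/-- The implied probabilities `p̃ᵢ = 1/(n(1 + ⟨λ, mᵢ⟩))`, where `λ` solves the
first-order condition, maximize the empirical log-likelihood `Σᵢ log(n pᵢ)` over all
probability weights satisfying the moment constraint. -/
theorem el_implied_probabilities_maximize {n k : ℕ} (hn : 1 ≤ n)
    (m : Fin n → (Fin k → ℝ)) (lam : Fin k → ℝ)
    (hpos : ∀ i, 0 < 1 + lam ⬝ᵥ m i)
    (hfoc : ∑ i, (1 + lam ⬝ᵥ m i)⁻¹ • m i = 0)
    (ptil : Fin n → ℝ)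
    (hptil : ∀ i, ptil i = 1 / (n * (1 + lam ⬝ᵥ m i)))
    (p : Fin n → ℝ) (hp : ∀ i, 0 < p i) (hpsum : ∑ i, p i = 1)
    (hpcon : ∑ i, p i • m i = 0) :
    ∑ i, Real.log (n * p i) ≤ ∑ i, Real.log (n * ptil i) := by
  have hn' : (0:ℝ) < n := by exact_mod_cast hn
  -- pointwise: log (n pᵢ) ≤ log (n p̃ᵢ) + (n pᵢ (1+λ·mᵢ) - 1)
  have key : ∀ i, Real.log (n * p i) ≤
      Real.log (n * ptil i) + (n * p i * (1 + lam ⬝ᵥ m i) - 1) := by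
    intro i
    have hc := hpos i
    have hnp : 0 < n * p i * (1 + lam ⬝ᵥ m i) :=
      mul_pos (mul_pos hn' (hp i)) hc
    have hlog : Real.log (n * p i * (1 + lam ⬝ᵥ m i)) ≤
        n * p i * (1 + lam ⬝ᵥ m i) - 1 := Real.log_le_sub_one_of_pos hnp
    have hsplit : Real.log (n * p i * (1 + lam ⬝ᵥ m i)) =
        Real.log (n * p i) + Real.log (1 + lam ⬝ᵥ m i) := by
      rw [Real.log_mul (ne_of_gt (mul_pos hn' (hp i))) (ne_of_gt hc)]
    have hptil' : Real.log (n * ptil i) = - Real.log (1 + lam ⬝ᵥ m i) := by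
      rw [hptil i]
      have : (n:ℝ) * (1 / (n * (1 + lam ⬝ᵥ m i))) = (1 + lam ⬝ᵥ m i)⁻¹ := by
        field_simp
      rw [this, Real.log_inv]
    rw [hptil']
    linarith [hsplit ▸ hlog]
  calc ∑ i, Real.log (n * p i)
      ≤ ∑ i, (Real.log (n * ptil i) + (n * p i * (1 + lam ⬝ᵥ m i) - 1)) :=
        Finset.sum_le_sum fun i _ => key i
    _ = ∑ i, Real.log (n * ptil i)
        + (∑ i, n * p i * (1 + lam ⬝ᵥ m i) - n) := by
        rw [Finset.sum_add_distrib, Finset.sum_sub_distrib]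
        simp
    _ = ∑ i, Real.log (n * ptil i) := by
        have hdot : ∑ i, p i * (lam ⬝ᵥ m i) = 0 := by
          have h0 : lam ⬝ᵥ (∑ i, p i • m i) = 0 := by rw [hpcon]; simp
          calc ∑ i, p i * (lam ⬝ᵥ m i)
              = ∑ i, ∑ j, lam j * (p i * m i j) :=
                Finset.sum_congr rfl fun i _ => by
                  rw [dotProduct, Finset.mul_sum]
                  exact Finset.sum_congr rfl fun j _ => by ring
            _ = ∑ j, ∑ i, lam j * (p i * m i j) := Finset.sum_comm
            _ = lam ⬝ᵥ (∑ i, p i • m i) := by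
                simp [dotProduct, Finset.sum_apply, Finset.mul_sum]
            _ = 0 := h0
        have : ∑ i, n * p i * (1 + lam ⬝ᵥ m i) = n := by
          have : ∑ i, n * p i * (1 + lam ⬝ᵥ m i)
              = n * (∑ i, p i + ∑ i, p i * (lam ⬝ᵥ m i)) := by
            rw [← Finset.sum_add_distrib, Finset.mul_sum]
            congr 1; funext i; ring
          rw [this, hpsum, hdot]; ring
        rw [this]; ring
end

section
/- Let (Ω, 𝓕, μ) be a probability space, let S : Ω → ℝ^d be measurable, and let K be a symmetric d×d real matrix. Suppose that for every τ ∈ ℝ^d the function ω ↦ exp(⟨τ, S(ω)⟩ − ½ τᵀKτ) is integrable with ∫ exp(⟨τ, S(ω)⟩ − ½ τᵀKτ) dμ(ω) = 1, and that for every τ ≠ 0 the event {ω : ⟨τ, S(ω)⟩ ≠ 0} has positive measure. Then K is positive definite: τᵀKτ > 0 for every τ ≠ 0. -/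
open MeasureTheory Matrix

/-!
Write `X = ⟨τ, S⟩` and `Q = τᵀKτ`. The normalization at `τ` and at `-τ` gives
`∫ exp X dμ = exp (Q / 2) = ∫ exp (-X) dμ`, hence `∫ cosh X dμ = exp (Q / 2)`. Since `cosh X ≥ 1`
with equality exactly where `X = 0`, and `{X ≠ 0}` has positive measure, `∫ cosh X dμ > 1`,
so `Q > 0`.
-/

section

variable {Ω : Type*} [MeasurableSpace Ω] {μ : Measure Ω}

lemma integrable_exp_of_integrable_exp_sub {f : Ω → ℝ} {c : ℝ}
    (hf : Integrable (fun ω => Real.exp (f ω - c)) μ) :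
    Integrable (fun ω => Real.exp (f ω)) μ := by
  simpa [← Real.exp_add] using hf.mul_const (Real.exp c)

lemma integral_exp_eq_of_integral_exp_sub_eq_one {f : Ω → ℝ} {c : ℝ}
    (hf : ∫ ω, Real.exp (f ω - c) ∂μ = 1) :
    ∫ ω, Real.exp (f ω) ∂μ = Real.exp c := by
  simpa [Real.exp_sub, integral_div, div_eq_one_iff_eq (Real.exp_pos c).ne'] using hf

lemma integrable_cosh {X : Ω → ℝ} (hpos : Integrable (fun ω => Real.exp (X ω)) μ)
    (hneg : Integrable (fun ω => Real.exp (-X ω)) μ) :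
    Integrable (fun ω => Real.cosh (X ω)) μ := by
  simpa only [Real.cosh_eq, Pi.add_apply] using (hpos.add hneg).div_const 2

lemma integral_cosh {X : Ω → ℝ} (hpos : Integrable (fun ω => Real.exp (X ω)) μ)
    (hneg : Integrable (fun ω => Real.exp (-X ω)) μ) :
    ∫ ω, Real.cosh (X ω) ∂μ = ((∫ ω, Real.exp (X ω) ∂μ) + ∫ ω, Real.exp (-X ω) ∂μ) / 2 := by
  simp only [Real.cosh_eq]
  rw [integral_div, integral_add hpos hneg]

lemma one_lt_integral_cosh [IsProbabilityMeasure μ] {X : Ω → ℝ}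
    (hX : Integrable (fun ω => Real.cosh (X ω)) μ) (hpos : 0 < μ {ω | X ω ≠ 0}) :
    1 < ∫ ω, Real.cosh (X ω) ∂μ := by
  have hsupp : Function.support (fun ω => Real.cosh (X ω) - 1) = {ω | X ω ≠ 0} := by
    ext ω
    simp only [Function.mem_support, Set.mem_ofPred_eq, sub_ne_zero, ← Real.one_lt_cosh]
    exact ((Real.one_le_cosh _).lt_iff_ne').symm
  have hnonneg : 0 ≤ fun ω => Real.cosh (X ω) - 1 := fun ω => sub_nonneg.2 (Real.one_le_cosh _)
  have h := (integral_pos_iff_support_of_nonneg hnonneg (hX.sub (integrable_const 1))).2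
    (hsupp ▸ hpos)
  rw [integral_sub hX (integrable_const 1), integral_const, probReal_univ] at h
  simpa using h

end

theorem quadratic_term_posDef_general {Ω : Type*} [MeasurableSpace Ω]
    (μ : Measure Ω) [IsProbabilityMeasure μ]
    {d : ℕ} (S : Ω → (Fin d → ℝ))
    (K : Matrix (Fin d) (Fin d) ℝ)
    (hint : ∀ τ : Fin d → ℝ,
      Integrable (fun ω => Real.exp (τ ⬝ᵥ S ω - (1 / 2) * (τ ⬝ᵥ K.mulVec τ))) μ)
    (hnorm : ∀ τ : Fin d → ℝ,
      ∫ ω, Real.exp (τ ⬝ᵥ S ω - (1 / 2) * (τ ⬝ᵥ K.mulVec τ)) ∂μ = 1)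
    (hnz : ∀ τ : Fin d → ℝ, τ ≠ 0 → 0 < μ {ω | τ ⬝ᵥ S ω ≠ 0}) :
    ∀ τ : Fin d → ℝ, τ ≠ 0 → 0 < τ ⬝ᵥ K.mulVec τ := by
  intro τ hτ
  have hquad_neg : (-τ) ⬝ᵥ K.mulVec (-τ) = τ ⬝ᵥ K.mulVec τ := by
    simp [mulVec_neg]
  have hint_neg := hint (-τ)
  have hnorm_neg := hnorm (-τ)
  simp only [hquad_neg, neg_dotProduct] at hint_neg hnorm_neg
  have hexp := integrable_exp_of_integrable_exp_sub (hint τ)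
  have hexp_neg := integrable_exp_of_integrable_exp_sub hint_neg
  have h := one_lt_integral_cosh (integrable_cosh hexp hexp_neg) (hnz τ hτ)
  rw [integral_cosh hexp hexp_neg, integral_exp_eq_of_integral_exp_sub_eq_one (hnorm τ),
    integral_exp_eq_of_integral_exp_sub_eq_one hnorm_neg, add_self_div_two,
    Real.one_lt_exp_iff] at h
  linarith

/-- If the linear-quadratic local representation normalizes,
`∫ exp(⟨τ,S⟩ − ½τᵀKτ) dμ = 1` for every `τ`, and `⟨τ,S⟩` is not almost surely zero for
`τ ≠ 0`, then the symmetric matrix `K` is positive definite. -/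
theorem quadratic_term_posDef {Ω : Type*} [MeasurableSpace Ω]
    (μ : Measure Ω) [IsProbabilityMeasure μ]
    {d : ℕ} (S : Ω → (Fin d → ℝ)) (hS : Measurable S)
    (K : Matrix (Fin d) (Fin d) ℝ) (hK : K.IsSymm)
    (hint : ∀ τ : Fin d → ℝ,
      Integrable (fun ω => Real.exp (τ ⬝ᵥ S ω - (1 / 2) * (τ ⬝ᵥ K.mulVec τ))) μ)
    (hnorm : ∀ τ : Fin d → ℝ,
      ∫ ω, Real.exp (τ ⬝ᵥ S ω - (1 / 2) * (τ ⬝ᵥ K.mulVec τ)) ∂μ = 1)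
    (hnz : ∀ τ : Fin d → ℝ, τ ≠ 0 → 0 < μ {ω | τ ⬝ᵥ S ω ≠ 0}) :
    ∀ τ : Fin d → ℝ, τ ≠ 0 → 0 < τ ⬝ᵥ K.mulVec τ :=
  quadratic_term_posDef_general μ S K hint hnorm hnz
end
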